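/- Let 0 ≤ λ' < λ be consecutive jumping values. Then: (i) the antinef closure of D_{λ'} + G_λ equals D_λ; and (ii) there exists ε₀ > 0 such that for every rational ε with 0 < ε < ε₀, the antinef closure of ⌊(λ − ε)F − K⌋ + G_λ equals D_λ. -/

import Mathlib

open scoped BigOperators

/-- Intersection `D · E i` of an integral divisor `D` with the `i`-th component. -/
def interZ {s : ℕ} (N : Matrix (Fin s) (Fin s) ℤ) (D : Fin s → ℤ) (i : Fin s) : ℤ :=
  ∑ j, D j * N j i

/-- An integral divisor is antinef if it intersects every exceptional component
nonpositively. -/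
def Antinef {s : ℕ} (r : ℕ) (N : Matrix (Fin s) (Fin s) ℤ) (D : Fin s → ℤ) : Prop :=
  ∀ i : Fin s, (i : ℕ) < r → interZ N D i ≤ 0

/-- `Dt` is the antinef closure of the rational divisor `D`: the least integral antinef
divisor lying entrywise above `D`. -/
def IsAntinefClosure {s : ℕ} (r : ℕ) (N : Matrix (Fin s) (Fin s) ℤ)
    (D : Fin s → ℚ) (Dt : Fin s → ℤ) : Prop :=
  Antinef r N Dt ∧ (∀ i, D i ≤ (Dt i : ℚ)) ∧
    ∀ D' : Fin s → ℤ, Antinef r N D' → (∀ i, D i ≤ (D' i : ℚ)) → ∀ i, Dt i ≤ D' i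

/-!
On each coordinate the floors `⌊c·e_i − k_i⌋`, `λ' ≤ c < λ`, are bounded by `e_i^{λ'}` and
approach `λ·e_i − k_i` from below, so `⌊λ·e_i − k_i⌋ ≤ e_i^{λ'} + 1`, with equality exactly on
the support of `G_λ`. Hence `⌊λF − K⌋ ≤ D_{λ'} + G_λ ≤ D_λ`, and a divisor squeezed between a
divisor and its antinef closure has the same closure. For (ii), once `ε·e_i ≤ 1` for all `i`,
`⌊(λ − ε)F − K⌋ + G_λ` lies below `D_{λ'} + G_λ`, while any antinef divisor above it lies above
`D_{λ−ε} = D_{λ'}` and exceeds it by one on the support of `G_λ`.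
-/

namespace IsAntinefClosure

variable {s r : ℕ} {N : Matrix (Fin s) (Fin s) ℤ} {A B : Fin s → ℚ} {Dt Dt' : Fin s → ℤ}

theorem le_of_antinef (hA : IsAntinefClosure r N A Dt) {D : Fin s → ℤ} (hD : Antinef r N D)
    (hAD : ∀ i, A i ≤ D i) (i : Fin s) : Dt i ≤ D i :=
  hA.2.2 D hD hAD i

theorem le_of_intCast {a : Fin s → ℤ} (h : IsAntinefClosure r N (fun i => (a i : ℚ)) Dt)
    (i : Fin s) : a i ≤ Dt i :=
  Int.cast_le.mp (h.2.1 i)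

theorem mono (hA : IsAntinefClosure r N A Dt) (hB : IsAntinefClosure r N B Dt')
    (hAB : ∀ i, A i ≤ B i) (i : Fin s) : Dt i ≤ Dt' i :=
  hA.le_of_antinef hB.1 (fun j => (hAB j).trans (hB.2.1 j)) i

theorem of_le_of_forall_antinef (hA : IsAntinefClosure r N A Dt) (hB : ∀ i, B i ≤ Dt i)
    (hBA : ∀ D : Fin s → ℤ, Antinef r N D → (∀ i, B i ≤ D i) → ∀ i, A i ≤ D i) :
    IsAntinefClosure r N B Dt :=
  ⟨hA.1, hB, fun D hD hBD => hA.le_of_antinef hD (hBA D hD hBD)⟩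

theorem of_le_of_le (hA : IsAntinefClosure r N A Dt) (hAB : ∀ i, A i ≤ B i)
    (hB : ∀ i, B i ≤ Dt i) : IsAntinefClosure r N B Dt :=
  hA.of_le_of_forall_antinef hB fun _ _ hBD i => (hAB i).trans (hBD i)

end IsAntinefClosure

section Floor

variable {a b f k ε : ℚ} {d : ℤ}

theorem le_of_lt_of_forall_floor_le (hf : 0 < f) (hab : a < b)
    (h : ∀ c, a ≤ c → c < b → ⌊c * f - k⌋ ≤ d) {m : ℤ} (hm : (m : ℚ) < b * f - k) : m ≤ d := by
  set c := max a ((m + k) / f)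
  have hcb : c < b := max_lt hab (by rw [div_lt_iff₀ hf]; linarith)
  have hmc : (m : ℚ) ≤ c * f - k := by
    have := (div_le_iff₀ hf).mp (le_max_right a ((m + k) / f))
    linarith
  exact (Int.le_floor.mpr hmc).trans (h c (le_max_left _ _) hcb)

theorem floor_eq_of_mul_eq (h : b * f = k + 1 + d) : ⌊b * f - k⌋ = d + 1 := by
  rw [Int.floor_eq_iff]; push_cast; constructor <;> linarith

theorem floor_le_add_ite (hf : 0 < f) (hab : a < b)
    (h : ∀ c, a ≤ c → c < b → ⌊c * f - k⌋ ≤ d) :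
    ⌊b * f - k⌋ ≤ d + if b * f = k + 1 + d then 1 else 0 := by
  split_ifs with hjump
  · exact (floor_eq_of_mul_eq hjump).le
  rcases (Int.floor_le (b * f - k)).lt_or_eq with hlt | heq
  · simpa using le_of_lt_of_forall_floor_le hf hab h hlt
  -- `b·f − k` is an integer `m ≠ d + 1`, and `m − 1 ≤ d` because `m − 1 < b·f − k`.
  have hne : ⌊b * f - k⌋ ≠ d + 1 := fun hm => hjump (by rw [hm] at heq; push_cast at heq; linarith)
  have := le_of_lt_of_forall_floor_le hf hab h (m := ⌊b * f - k⌋ - 1) (by push_cast; linarith)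
  omega

theorem le_floor_sub_mul_sub (h : b * f = k + 1 + d) (hε : ε * f ≤ 1) :
    d ≤ ⌊(b - ε) * f - k⌋ :=
  Int.le_floor.mpr (by rw [sub_mul]; linarith)

end Floor

theorem exists_pos_forall_mul_le_one {ι : Type*} [Fintype ι] (F : ι → ℚ) :
    ∃ δ : ℚ, 0 < δ ∧ ∀ i, δ * F i ≤ 1 := by
  have hS : 0 < ∑ j, |F j| + 1 := by positivity
  refine ⟨1 / (∑ j, |F j| + 1), by positivity, fun i => ?_⟩
  rw [div_mul_eq_mul_div, one_mul, div_le_one hS]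
  calc F i ≤ |F i| := le_abs_self _
    _ ≤ ∑ j, |F j| := Finset.single_le_sum (fun j _ => abs_nonneg (F j)) (Finset.mem_univ i)
    _ ≤ ∑ j, |F j| + 1 := by linarith

/-- The minimal jumping divisor `G_λ`, with `Dl'` standing for `D_{λ'}`. -/
def minimalJumpingDivisor {s : ℕ} (F : Fin s → ℤ) (K : Fin s → ℚ) (lam : ℚ) (Dl' : Fin s → ℤ) :
    Fin s → ℤ :=
  fun i => if lam * F i = K i + 1 + Dl' i then 1 else 0

theorem minimalJumpingDivisor_eq_zero_or_eq_one {s : ℕ} (F : Fin s → ℤ) (K : Fin s → ℚ)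
    (lam : ℚ) (Dl' : Fin s → ℤ) (i : Fin s) :
    minimalJumpingDivisor F K lam Dl' i = 0 ∨
      minimalJumpingDivisor F K lam Dl' i = 1 ∧ lam * F i = K i + 1 + Dl' i := by
  unfold minimalJumpingDivisor
  split_ifs with h <;> simp [h]

theorem minimalJumpingDivisor_nonneg {s : ℕ} (F : Fin s → ℤ) (K : Fin s → ℚ) (lam : ℚ)
    (Dl' : Fin s → ℤ) (i : Fin s) : 0 ≤ minimalJumpingDivisor F K lam Dl' i := by
  rcases minimalJumpingDivisor_eq_zero_or_eq_one F K lam Dl' i with h | ⟨h, -⟩ <;> omega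

section ConsecutiveJumpingValues

variable {s r : ℕ} {N : Matrix (Fin s) (Fin s) ℤ} {F Dl' Dl : Fin s → ℤ} {K : Fin s → ℚ}
  {lam' lam : ℚ}

theorem floor_le_of_consecutive
    (hconsec : ∀ c : ℚ, lam' ≤ c → c < lam →
      IsAntinefClosure r N (fun i => (⌊c * (F i : ℚ) - K i⌋ : ℚ)) Dl')
    {c : ℚ} (hc' : lam' ≤ c) (hc : c < lam) (i : Fin s) : ⌊c * (F i : ℚ) - K i⌋ ≤ Dl' i :=
  (hconsec c hc' hc).le_of_intCast i

variable (hF1 : ∀ i, 1 ≤ F i) (hll : lam' < lam)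
  (hconsec : ∀ c : ℚ, lam' ≤ c → c < lam →
    IsAntinefClosure r N (fun i => (⌊c * (F i : ℚ) - K i⌋ : ℚ)) Dl')
  (hDl : IsAntinefClosure r N (fun i => (⌊lam * (F i : ℚ) - K i⌋ : ℚ)) Dl)
include hF1 hll hconsec hDl

theorem isAntinefClosure_add_minimalJumpingDivisor :
    IsAntinefClosure r N
      (fun i => ((Dl' i + minimalJumpingDivisor F K lam Dl' i : ℤ) : ℚ)) Dl := by
  have hFpos (i : Fin s) : (0 : ℚ) < F i := by exact_mod_cast hF1 i
  have hDl'Dl := (hconsec lam' le_rfl hll).mono hDl fun j => by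
    have := mul_le_mul_of_nonneg_right hll.le (hFpos j).le
    exact_mod_cast Int.floor_mono (by linarith)
  refine hDl.of_le_of_le (fun i => ?_) (fun i => Int.cast_le.mpr ?_) <;>
    unfold minimalJumpingDivisor
  · exact_mod_cast floor_le_add_ite (hFpos i) hll fun c hc' hc =>
      floor_le_of_consecutive hconsec hc' hc i
  · have hfloor := hDl.le_of_intCast i
    split_ifs with hjump
    · rwa [floor_eq_of_mul_eq hjump] at hfloor
    · simpa using hDl'Dl i

theorem isAntinefClosure_floor_sub_add_minimalJumpingDivisor {ε : ℚ} (hε : 0 < ε)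
    (hεl : ε ≤ lam - lam') (hεF : ∀ i, ε * F i ≤ 1) :
    IsAntinefClosure r N
      (fun i => ((⌊(lam - ε) * (F i : ℚ) - K i⌋ + minimalJumpingDivisor F K lam Dl' i : ℤ) : ℚ))
      Dl := by
  have hG := isAntinefClosure_add_minimalJumpingDivisor hF1 hll hconsec hDl
  have hclosure := hconsec (lam - ε) (by linarith) (by linarith)
  refine hG.of_le_of_forall_antinef (fun i => Int.cast_le.mpr ?_)
    fun D hD hBD i => Int.cast_le.mpr ?_
  · have := hG.le_of_intCast i
    have := hclosure.le_of_intCast i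
    omega
  · replace hBD (j : Fin s) :
        ⌊(lam - ε) * (F j : ℚ) - K j⌋ + minimalJumpingDivisor F K lam Dl' j ≤ D j := by
      exact_mod_cast hBD j
    -- `D` lies above `⌊(λ - ε)F - K⌋`, hence above its antinef closure `D_{λ'}`.
    have hDl'D := hclosure.le_of_antinef hD fun j => Int.cast_le.mpr
      ((le_add_of_nonneg_right (minimalJumpingDivisor_nonneg F K lam Dl' j)).trans (hBD j))
    have := hBD i
    rcases minimalJumpingDivisor_eq_zero_or_eq_one F K lam Dl' i with hG0 | ⟨hG1, hjump⟩
    · simpa [hG0] using hDl'D i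
    · have := le_floor_sub_mul_sub hjump (hεF i)
      omega

end ConsecutiveJumpingValues

theorem jump_forward_via_minimal_divisor_general
    (s r : ℕ)
    (N : Matrix (Fin s) (Fin s) ℤ)
    (F : Fin s → ℤ) (hF1 : ∀ i, 1 ≤ F i)
    (K : Fin s → ℚ)
    (lam' lam : ℚ) (hll : lam' < lam)
    (Dl' : Fin s → ℤ)
    (hconsec : ∀ c : ℚ, lam' ≤ c → c < lam →
      IsAntinefClosure r N (fun i => (⌊c * (F i : ℚ) - K i⌋ : ℚ)) Dl')
    (Dl : Fin s → ℤ)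
    (hDl : IsAntinefClosure r N (fun i => (⌊lam * (F i : ℚ) - K i⌋ : ℚ)) Dl)
    (Gl : Fin s → ℤ)
    (hGl : ∀ i, Gl i = if lam * (F i : ℚ) = K i + 1 + (Dl' i : ℚ) then 1 else 0)
    :
    IsAntinefClosure r N (fun i => ((Dl' i + Gl i : ℤ) : ℚ)) Dl ∧
      ∃ ε₀ : ℚ, 0 < ε₀ ∧ ∀ ε : ℚ, 0 < ε → ε < ε₀ →
        IsAntinefClosure r N
          (fun i => ((⌊(lam - ε) * (F i : ℚ) - K i⌋ + Gl i : ℤ) : ℚ)) Dl := by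
  obtain rfl : Gl = minimalJumpingDivisor F K lam Dl' := funext hGl
  obtain ⟨δ, hδ, hδF⟩ := exists_pos_forall_mul_le_one fun i => (F i : ℚ)
  have hFnonneg (i : Fin s) : (0 : ℚ) ≤ F i := by exact_mod_cast (zero_le_one.trans (hF1 i))
  refine ⟨isAntinefClosure_add_minimalJumpingDivisor hF1 hll hconsec hDl,
    min (lam - lam') δ, lt_min (sub_pos.mpr hll) hδ, fun ε hε hεlt => ?_⟩
  have hεδ : ε ≤ δ := hεlt.le.trans (min_le_right _ _)
  exact isAntinefClosure_floor_sub_add_minimalJumpingDivisor hF1 hll hconsec hDl hε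
    (hεlt.le.trans (min_le_left _ _))
    fun i => (mul_le_mul_of_nonneg_right hεδ (hFnonneg i)).trans (hδF i)

/-- **Proposition `jump2`.** For consecutive jumping values
`0 ≤ λ' < λ`:  (i) the antinef closure of `D_{λ'} + G_λ` is `D_λ`; (ii) for all
sufficiently small rational `ε > 0`, the antinef closure of `⌊(λ−ε)F − K⌋ + G_λ`
is `D_λ`. -/
theorem jump_forward_via_minimal_divisor
    (s r : ℕ) (hr : 1 ≤ r) (hrs : r ≤ s)
    (N : Matrix (Fin s) (Fin s) ℤ)
    (hsym : ∀ i j, N i j = N j i)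
    (hoff : ∀ i j : Fin s, i ≠ j → 0 ≤ N i j)
    (hneg : ∀ x : Fin s → ℚ, (∀ i : Fin s, r ≤ (i : ℕ) → x i = 0) → x ≠ 0 →
      (∑ i, ∑ j, x i * x j * (N i j : ℚ)) < 0)
    (F : Fin s → ℤ) (hF1 : ∀ i, 1 ≤ F i) (hFanti : Antinef r N F)
    (K : Fin s → ℚ) (hKaff : ∀ i : Fin s, r ≤ (i : ℕ) → K i = 0)
    (hKexc : ∀ i : Fin s, (i : ℕ) < r →
      (∑ j, K j * (N j i : ℚ)) + (N i i : ℚ) = -2)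
    (lam' lam : ℚ) (hl0 : 0 ≤ lam') (hll : lam' < lam)
    (Dl' : Fin s → ℤ)
    (hconsec : ∀ c : ℚ, lam' ≤ c → c < lam →
      IsAntinefClosure r N (fun i => (⌊c * (F i : ℚ) - K i⌋ : ℚ)) Dl')
    (Dl : Fin s → ℤ)
    (hDl : IsAntinefClosure r N (fun i => (⌊lam * (F i : ℚ) - K i⌋ : ℚ)) Dl)
    (hjump : Dl ≠ Dl')
    (Gl : Fin s → ℤ)
    (hGl : ∀ i, Gl i = if lam * (F i : ℚ) = K i + 1 + (Dl' i : ℚ) then 1 else 0)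
    :
    IsAntinefClosure r N (fun i => ((Dl' i + Gl i : ℤ) : ℚ)) Dl ∧
      ∃ ε₀ : ℚ, 0 < ε₀ ∧ ∀ ε : ℚ, 0 < ε → ε < ε₀ →
        IsAntinefClosure r N
          (fun i => ((⌊(lam - ε) * (F i : ℚ) - K i⌋ + Gl i : ℤ) : ℚ)) Dl :=
  jump_forward_via_minimal_divisor_general s r N F hF1 K lam' lam hll Dl' hconsec Dl hDl Gl hGl
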